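/- arXiv:1609.03054 — 7 statements merged into one kernel-verified Lean document; each statement's English description precedes it below -/
import Mathlib

section
/- Let X → Y ∨ Z be an mvd clause over a finite variable set V with Y and Z nonempty. If interpretations I and J both satisfy X → Y ∨ Z but their intersection I ∩ J (the interpretation with true(I ∩ J) = true(I) ∩ true(J)) violates X → Y ∨ Z, then true(I) ∪ true(J) = V. -/
open Finset

/-- An interpretation `I` (its set of true variables) violates the mvd clause
`X → Y ∨ Z` (with `Y`, `Z` nonempty): `X ⊆ true(I)` and some `v ∈ Y`, `w ∈ Z`
are false in `I`. -/
def MvdViolates {α : Type*} [Fintype α] [DecidableEq α]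
    (I X Y Z : Finset α) : Prop :=
  X ⊆ I ∧ ∃ v ∈ Y, ∃ w ∈ Z, v ∉ I ∧ w ∉ I

theorem stmt_2 {α : Type*} [Fintype α] [DecidableEq α]
    (X Y Z I J : Finset α)
    (hXY : Disjoint X Y) (hXZ : Disjoint X Z) (hYZ : Disjoint Y Z)
    (hcover : X ∪ Y ∪ Z = Finset.univ)
    (hY : Y.Nonempty) (hZ : Z.Nonempty)
    (hI : ¬ MvdViolates I X Y Z) (hJ : ¬ MvdViolates J X Y Z)
    (hIJ : MvdViolates (I ∩ J) X Y Z) :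
    I ∪ J = Finset.univ := by
  obtain ⟨hXIJ, v, hv, w, hw, hvn, hwn⟩ := hIJ
  have hXI : X ⊆ I := hXIJ.trans inter_subset_left
  have hXJ : X ⊆ J := hXIJ.trans inter_subset_right
  have key : ∀ K : Finset α, X ⊆ K → ¬ MvdViolates K X Y Z → Y ⊆ K ∨ Z ⊆ K := by
    intro K hXK hK
    by_contra h
    push_neg at h
    obtain ⟨a, ha, haK⟩ := not_subset.mp h.1
    obtain ⟨b, hb, hbK⟩ := not_subset.mp h.2
    exact hK ⟨hXK, a, ha, b, hb, haK, hbK⟩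
  rcases key I hXI hI with hYI | hZI <;> rcases key J hXJ hJ with hYJ | hZJ
  · exact absurd (mem_inter.mpr ⟨hYI hv, hYJ hv⟩) hvn
  · apply Finset.eq_univ_of_forall
    intro x
    have hx : x ∈ X ∪ Y ∪ Z := hcover ▸ mem_univ x
    rcases mem_union.mp hx with hx | hx
    · rcases mem_union.mp hx with hx | hx
      · exact mem_union_left _ (hXI hx)
      · exact mem_union_left _ (hYI hx)
    · exact mem_union_right _ (hZJ hx)
  · apply Finset.eq_univ_of_forall
    intro x
    have hx : x ∈ X ∪ Y ∪ Z := hcover ▸ mem_univ x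
    rcases mem_union.mp hx with hx | hx
    · rcases mem_union.mp hx with hx | hx
      · exact mem_union_left _ (hXI hx)
      · exact mem_union_right _ (hYJ hx)
    · exact mem_union_left _ (hZI hx)
  · exact absurd (mem_inter.mpr ⟨hZI hw, hZJ hw⟩) hwn
end

section
/- Let T be a set of mvd clauses over a finite variable set V, where every clause X → Y ∨ Z in T has Y and Z nonempty. If interpretations I and J both satisfy every clause of T, but the intersection I ∩ J violates some clause of T, then true(I) ∪ true(J) = V. -/
open Finset

theorem stmt_3 {α : Type*} [Fintype α] [DecidableEq α]
    (T : Set (Finset α × Finset α × Finset α))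
    (hvalid : ∀ c ∈ T, Disjoint c.1 c.2.1 ∧ Disjoint c.1 c.2.2 ∧
      Disjoint c.2.1 c.2.2 ∧ c.1 ∪ c.2.1 ∪ c.2.2 = Finset.univ ∧
      c.2.1.Nonempty ∧ c.2.2.Nonempty)
    (I J : Finset α)
    (hI : ∀ c ∈ T, ¬ MvdViolates I c.1 c.2.1 c.2.2)
    (hJ : ∀ c ∈ T, ¬ MvdViolates J c.1 c.2.1 c.2.2)
    (hIJ : ∃ c ∈ T, MvdViolates (I ∩ J) c.1 c.2.1 c.2.2) :
    I ∪ J = Finset.univ := by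
  obtain ⟨c, hcT, hXsub, v, hv, w, hw, hvIJ, hwIJ⟩ := hIJ
  obtain ⟨_, _, _, hcover, _, _⟩ := hvalid c hcT
  have hXI : c.1 ⊆ I := hXsub.trans inter_subset_left
  have hXJ : c.1 ⊆ J := hXsub.trans inter_subset_right
  have hInoviol := hI c hcT
  have hJnoviol := hJ c hcT
  simp only [MvdViolates, not_and, not_exists] at hInoviol hJnoviol
  -- from no violation : for all v'∈Y,w'∈Z, ¬(v'∉I ∧ w'∉I)
  have keyI : ∀ v' ∈ c.2.1, ∀ w' ∈ c.2.2, v' ∈ I ∨ w' ∈ I := by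
    intro v' hv' w' hw'
    by_contra h
    push_neg at h
    exact hInoviol hXI v' hv' w' hw' h.1 h.2
  have keyJ : ∀ v' ∈ c.2.1, ∀ w' ∈ c.2.2, v' ∈ J ∨ w' ∈ J := by
    intro v' hv' w' hw'
    by_contra h
    push_neg at h
    exact hJnoviol hXJ v' hv' w' hw' h.1 h.2
  rw [mem_inter, not_and_or] at hvIJ hwIJ
  -- main claim: Y ∪ Z ⊆ I ∪ J
  have hYZ : c.2.1 ∪ c.2.2 ⊆ I ∪ J := by
    rcases hvIJ with hvI | hvJ
    · -- v ∉ I, so Z ⊆ I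
      have hZI : c.2.2 ⊆ I := fun w' hw' => ((keyI v hv w' hw').resolve_left hvI)
      have hwJ : w ∉ J := hwIJ.resolve_left (by exact fun h => h (hZI hw))
      have hYJ : c.2.1 ⊆ J := fun v' hv' => ((keyJ v' hv' w hw).resolve_right hwJ)
      exact union_subset (hYJ.trans subset_union_right) (hZI.trans subset_union_left)
    · -- v ∉ J, so Z ⊆ J
      have hZJ : c.2.2 ⊆ J := fun w' hw' => ((keyJ v hv w' hw').resolve_left hvJ)
      have hwI : w ∉ I := hwIJ.resolve_right (by exact fun h => h (hZJ hw))
      have hYI : c.2.1 ⊆ I := fun v' hv' => ((keyI v' hv' w hw).resolve_right hwI)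
      exact union_subset (hYI.trans subset_union_left) (hZJ.trans subset_union_right)
  rw [← univ_subset_iff]
  rw [← hcover]
  exact union_subset (union_subset (hXI.trans subset_union_left) ((subset_union_left.trans hYZ))) (subset_union_right.trans hYZ)
end

section
/- Let V be a finite variable set, X ⊆ V, v ∈ V \ X. Every interpretation I over V satisfies the Horn clause X → v (i.e., X ⊆ true(I) implies v ∈ true(I)) if and only if I satisfies both mvd clauses V \ {v} → {v} ∨ ∅ and X → {v} ∨ (V \ (X ∪ {v})). (Here, when one disjunct is empty, I violates X' → Y' ∨ Z' iff X' ⊆ true(I) and false(I) = {w} for some w ∈ Y' ∪ Z'.) -/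
open Finset

/-- General violation of an mvd clause `X → Y ∨ Z`: if both disjuncts are
nonempty, `I` violates it iff `X ⊆ true(I)` and some `v ∈ Y`, `w ∈ Z` are
false; if one disjunct is empty, `I` violates it iff `X ⊆ true(I)` and
`false(I) = {w}` for some `w ∈ Y ∪ Z`. -/
def MvdViolatesG {α : Type*} [Fintype α] [DecidableEq α]
    (I X Y Z : Finset α) : Prop :=
  X ⊆ I ∧
    (((Y.Nonempty ∧ Z.Nonempty) ∧ ∃ v ∈ Y, ∃ w ∈ Z, v ∉ I ∧ w ∉ I) ∨
     ((Y = ∅ ∨ Z = ∅) ∧ ∃ w ∈ Y ∪ Z, Iᶜ = {w}))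

theorem stmt_5 {α : Type*} [Fintype α] [DecidableEq α]
    (X : Finset α) (v : α) (hv : v ∉ X) :
    ∀ I : Finset α,
      (X ⊆ I → v ∈ I) ↔
        (¬ MvdViolatesG I (Finset.univ \ {v}) {v} ∅ ∧
         ¬ MvdViolatesG I X {v} (Finset.univ \ (X ∪ {v}))) := by
  intro I
  constructor
  · intro H
    constructor
    · rintro ⟨hsub, hviol⟩
      rcases hviol with ⟨⟨_, hZ⟩, _⟩ | ⟨_, w, hw, hIc⟩
      · exact absurd hZ (by simp)
      · simp only [Finset.union_empty, Finset.mem_singleton] at hw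
        subst hw
        have hXI : X ⊆ I := fun x hx => hsub (by
          simp only [Finset.mem_sdiff, Finset.mem_univ, Finset.mem_singleton, true_and]
          exact fun h => hv (h ▸ hx))
        have hvI := H hXI
        have : w ∈ Iᶜ := by rw [hIc]; simp
        simp at this
        exact this hvI
    · rintro ⟨hsub, hviol⟩
      have hvI := H hsub
      rcases hviol with ⟨_, u, hu, w, hw, huI, hwI⟩ | ⟨hemp, w, hw, hIc⟩
      · simp only [Finset.mem_singleton] at hu
        exact huI (hu ▸ hvI)
      · rcases hemp with h | h
        · exact absurd h (by simp)
        · rw [h] at hw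
          simp only [Finset.union_empty, Finset.mem_singleton] at hw
          subst hw
          have : w ∈ Iᶜ := by rw [hIc]; simp
          simp at this
          exact this hvI
  · rintro ⟨hA, hB⟩ hXI
    by_contra hvI
    by_cases hZ : ∃ w ∈ Finset.univ \ (X ∪ {v}), w ∉ I
    · rcases hZ with ⟨w, hw, hwI⟩
      exact hB ⟨hXI, Or.inl ⟨⟨⟨v, by simp⟩, ⟨w, hw⟩⟩,
        v, by simp, w, hw, hvI, hwI⟩⟩
    · push_neg at hZ
      apply hA
      refine ⟨?_, Or.inr ⟨Or.inr rfl, v, by simp, ?_⟩⟩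
      · intro u hu
        simp only [Finset.mem_sdiff, Finset.mem_singleton] at hu
        by_cases hx : u ∈ X
        · exact hXI hx
        · exact hZ u (by simp [hx, hu.2])
      · ext u
        simp only [Finset.mem_compl, Finset.mem_singleton]
        constructor
        · intro huI
          by_contra hne
          by_cases hx : u ∈ X
          · exact huI (hXI hx)
          · exact huI (hZ u (by simp [hx, hne]))
        · rintro rfl; exact hvI
end

section
/- Let V be a finite set of attributes, each attribute A with a domain dom(A), and let I be an interpretation over V. Define two tuples t, t' over V such that for each attribute A ∈ V, t[A] = t'[A] if and only if A ∈ true(I) (this is possible provided each domain has at least two elements). Then for any mvd X → Y ∨ Z over V with Y, Z nonempty, the mvd holds in the two-tuple relation {t, t'} if and only if I satisfies the mvd clause X → Y ∨ Z. -/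
open Finset

/-- The mvd `X → Y ∨ Z` holds in the relation `r`: for all tuples
`t1, t2 ∈ r` agreeing on `X`, the tuple agreeing with `t2` on `Y` and
with `t1` elsewhere (i.e. on `X ∪ Z`) is also in `r`. -/
def MvdHolds {α : Type*} [Fintype α] [DecidableEq α] {dom : α → Type*}
    (r : Set (∀ a, dom a)) (X Y Z : Finset α) : Prop :=
  ∀ t1 ∈ r, ∀ t2 ∈ r, (∀ a ∈ X, t1 a = t2 a) →
    (fun a => if a ∈ Y then t2 a else t1 a) ∈ r

theorem stmt_7 {α : Type*} [Fintype α] [DecidableEq α] {dom : α → Type*}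
    (hdom : ∀ a, ∃ x y : dom a, x ≠ y)
    (I : Finset α) (t t' : ∀ a, dom a)
    (ht : ∀ a, t a = t' a ↔ a ∈ I)
    (X Y Z : Finset α)
    (hXY : Disjoint X Y) (hXZ : Disjoint X Z) (hYZ : Disjoint Y Z)
    (hcover : X ∪ Y ∪ Z = Finset.univ)
    (hY : Y.Nonempty) (hZ : Z.Nonempty) :
    MvdHolds ({t, t'} : Set (∀ a, dom a)) X Y Z ↔ ¬ MvdViolates I X Y Z := by
  constructor
  · intro h hv
    obtain ⟨hXI, v, hvY, w, hwZ, hvI, hwI⟩ := hv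
    have hagree : ∀ a ∈ X, t a = t' a := fun a ha => (ht a).2 (hXI ha)
    have hmem := h t (Or.inl rfl) t' (Or.inr rfl) hagree
    have hv' : t v ≠ t' v := fun h => hvI ((ht v).1 h)
    have hw' : t w ≠ t' w := fun h => hwI ((ht w).1 h)
    have hwY : w ∉ Y := fun hwY => (Finset.disjoint_left.1 hYZ hwY) hwZ
    rcases hmem with hm | hm
    · have := congrFun hm v
      simp only [hvY, if_pos] at this
      exact hv' this.symm
    · have := congrFun hm w
      simp only [hwY, if_neg, if_false] at this
      exact hw' this
  · intro hnv
    have key : (∀ a ∈ X, t a = t' a) → (Y ⊆ I ∨ Z ⊆ I) := by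
      intro hag
      have hXI : X ⊆ I := fun a ha => (ht a).1 (hag a ha)
      by_contra hc
      push_neg at hc
      obtain ⟨v, hvY, hvI⟩ := Finset.not_subset.1 hc.1
      obtain ⟨w, hwZ, hwI⟩ := Finset.not_subset.1 hc.2
      exact hnv ⟨hXI, v, hvY, w, hwZ, hvI, hwI⟩
    have eqI : ∀ a, a ∈ I → t a = t' a := fun a ha => (ht a).2 ha
    intro t1 ht1 t2 ht2 hag
    rcases ht1 with h1 | h1 <;> rcases ht2 with h2 | h2 <;> subst h1 <;> subst h2
    · left; funext a; by_cases ha : a ∈ Y <;> simp [ha]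
    · rcases key hag with hYI | hZI
      · left; funext a; by_cases ha : a ∈ Y
        · simp [ha, (eqI a (hYI ha)).symm]
        · simp [ha]
      · right; funext a; by_cases ha : a ∈ Y
        · simp [ha]
        · simp only [ha, if_neg, if_false]
          have haU : a ∈ X ∪ Y ∪ Z := hcover ▸ Finset.mem_univ a
          rcases Finset.mem_union.1 haU with h' | h'
          · rcases Finset.mem_union.1 h' with h'' | h''
            · exact eqI a ((ht a).1 (hag a h''))
            · exact absurd h'' ha
          · exact eqI a (hZI h')
    · have hag' := fun a (ha : a ∈ X) => (hag a ha).symm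
      rcases key hag' with hYI | hZI
      · right; funext a; by_cases ha : a ∈ Y
        · simp [ha, eqI a (hYI ha)]
        · simp [ha]
      · left; funext a; by_cases ha : a ∈ Y
        · simp [ha]
        · simp only [ha, if_neg, if_false]
          have haU : a ∈ X ∪ Y ∪ Z := hcover ▸ Finset.mem_univ a
          rcases Finset.mem_union.1 haU with h' | h'
          · rcases Finset.mem_union.1 h' with h'' | h''
            · exact (eqI a ((ht a).1 (hag' a h''))).symm
            · exact absurd h'' ha
          · exact (eqI a (hZI h')).symm
    · right; funext a; by_cases ha : a ∈ Y <;> simp [ha]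
end

section
/- Let r be a relation over a finite attribute scheme V, let T be a set of mvds over V and m a single mvd over V. If every mvd in T holds in r but m does not hold in r, then there exists a two-element subrelation p ⊆ r (a pair of tuples of r) such that every mvd in T holds in p and m does not hold in p. -/
open Finset

theorem stmt_8 {α : Type*} [Fintype α] [DecidableEq α] {dom : α → Type*}
    (r : Set (∀ a, dom a))
    (T : Set (Finset α × Finset α × Finset α))
    (m : Finset α × Finset α × Finset α)
    (hvalidT : ∀ c ∈ T, Disjoint c.1 c.2.1 ∧ Disjoint c.1 c.2.2 ∧
      Disjoint c.2.1 c.2.2 ∧ c.1 ∪ c.2.1 ∪ c.2.2 = Finset.univ)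
    (hvalidm : Disjoint m.1 m.2.1 ∧ Disjoint m.1 m.2.2 ∧
      Disjoint m.2.1 m.2.2 ∧ m.1 ∪ m.2.1 ∪ m.2.2 = Finset.univ)
    (hT : ∀ c ∈ T, MvdHolds r c.1 c.2.1 c.2.2)
    (hm : ¬ MvdHolds r m.1 m.2.1 m.2.2) :
    ∃ t1 ∈ r, ∃ t2 ∈ r, t1 ≠ t2 ∧
      (∀ c ∈ T, MvdHolds ({t1, t2} : Set (∀ a, dom a)) c.1 c.2.1 c.2.2) ∧
      ¬ MvdHolds ({t1, t2} : Set (∀ a, dom a)) m.1 m.2.1 m.2.2 := by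
  classical
  rw [MvdHolds] at hm
  push_neg at hm
  obtain ⟨a0, ha0, b0, hb0, hab0, hnab0⟩ := hm
  -- violating pairs and agreement sets
  set Viol : (∀ a, dom a) → (∀ a, dom a) → Prop :=
    fun s1 s2 => s1 ∈ r ∧ s2 ∈ r ∧ (∀ a ∈ m.1, s1 a = s2 a) ∧
      (fun a => if a ∈ m.2.1 then s2 a else s1 a) ∉ r with hViol
  set W : (∀ a, dom a) → (∀ a, dom a) → Finset α :=
    fun s1 s2 => Finset.univ.filter (fun a => s1 a = s2 a) with hWdef
  have hWmem : ∀ s1 s2 : ∀ a, dom a, ∀ a : α, a ∈ W s1 s2 ↔ s1 a = s2 a := by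
    intro s1 s2 a; simp [hWdef]
  have hWle : ∀ s1 s2 : ∀ a, dom a, (W s1 s2).card ≤ Fintype.card α := by
    intro s1 s2
    simpa using Finset.card_filter_le Finset.univ (fun a => s1 a = s2 a)
  set P : ℕ → Prop := fun n => ∃ s1 s2, Viol s1 s2 ∧ (W s1 s2).card = n with hPdef
  have hP0 : P ((W a0 b0).card) := ⟨a0, b0, ⟨ha0, hb0, hab0, hnab0⟩, rfl⟩
  obtain ⟨u1, u2, hviol, hcardW⟩ := Nat.findGreatest_spec (hWle a0 b0) hP0
  have hmax : ∀ s1 s2, Viol s1 s2 → (W s1 s2).card ≤ (W u1 u2).card := by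
    intro s1 s2 hv
    rw [hcardW]
    exact Nat.le_findGreatest (hWle s1 s2) ⟨s1, s2, hv, rfl⟩
  have notviol : ∀ s1 s2, W u1 u2 ⊂ W s1 s2 → ¬ Viol s1 s2 := by
    intro s1 s2 hss hv
    exact absurd (hmax s1 s2 hv) (not_le.mpr (Finset.card_lt_card hss))
  obtain ⟨hu1r, hu2r, hagX, hsnot⟩ := hviol
  have hne12 : u1 ≠ u2 := by
    intro h
    apply hsnot
    have heq : (fun a => if a ∈ m.2.1 then u2 a else u1 a) = u1 := by
      funext a; rw [← h]; simp
    rw [heq]; exact hu1r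
  -- the key claim: all mvds of T hold in {u1, u2}
  have hkey : ∀ c ∈ T, MvdHolds ({u1, u2} : Set (∀ a, dom a)) c.1 c.2.1 c.2.2 := by
    intro c hc s1 hs1 s2 hs2 hag
    have hdisj : Disjoint c.1 c.2.1 := (hvalidT c hc).1
    simp only [Set.mem_insert_iff, Set.mem_singleton_iff] at hs1 hs2
    rcases hs1 with h1 | h1 <;> rcases hs2 with h2 | h2
    · simp [h1, h2]
    · -- s1 = u1, s2 = u2 : main case
      rw [h1, h2] at hag ⊢
      by_contra hne
      simp only [Set.mem_insert_iff, Set.mem_singleton_iff, not_or] at hne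
      obtain ⟨hne1, hne2⟩ := hne
      set u : ∀ a, dom a := fun a => if a ∈ c.2.1 then u2 a else u1 a with hu_def
      have hur : u ∈ r := hT c hc u1 hu1r u2 hu2r hag
      obtain ⟨a2, ha2⟩ := Function.ne_iff.mp hne2
      have ha2Y' : a2 ∉ c.2.1 := by
        intro h; exact ha2 (by simp [hu_def, h])
      have ha2u1 : u a2 = u1 a2 := by simp [hu_def, ha2Y']
      have ha2ne : u1 a2 ≠ u2 a2 := by rw [← ha2u1]; exact ha2
      obtain ⟨a1, ha1⟩ := Function.ne_iff.mp hne1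
      have ha1Y' : a1 ∈ c.2.1 := by
        by_contra h; exact ha1 (by simp [hu_def, h])
      have ha1u2 : u a1 = u2 a1 := by simp [hu_def, ha1Y']
      have ha1ne : u1 a1 ≠ u2 a1 := fun h => ha1 (by rw [ha1u2, ← h])
      -- v = mix(u1, u; Y) is in r
      have hagXu : ∀ a ∈ m.1, u1 a = u a := by
        intro a ha
        simp only [hu_def]
        split
        · exact hagX a ha
        · rfl
      have hvr : (fun a => if a ∈ m.2.1 then u a else u1 a) ∈ r := by
        by_contra hv
        have hsub : W u1 u2 ⊆ W u1 u := by
          intro a ha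
          rw [hWmem] at ha ⊢
          simp only [hu_def]
          split
          · exact ha
          · rfl
        exact notviol u1 u ((Finset.ssubset_iff_of_subset hsub).mpr
          ⟨a2, (hWmem _ _ _).mpr ha2u1.symm, fun h => ha2ne ((hWmem _ _ _).mp h)⟩)
          ⟨hu1r, hur, hagXu, hv⟩
      -- w = mix(u, u2; Y) is in r
      have hagXu2 : ∀ a ∈ m.1, u a = u2 a := by
        intro a ha
        simp only [hu_def]
        split
        · rfl
        · exact hagX a ha
      have hwr : (fun a => if a ∈ m.2.1 then u2 a else u a) ∈ r := by
        by_contra hw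
        have hsub : W u1 u2 ⊆ W u u2 := by
          intro a ha
          rw [hWmem] at ha ⊢
          simp only [hu_def]
          split
          · rfl
          · exact ha
        exact notviol u u2 ((Finset.ssubset_iff_of_subset hsub).mpr
          ⟨a1, (hWmem _ _ _).mpr ha1u2, fun h => ha1ne ((hWmem _ _ _).mp h)⟩)
          ⟨hur, hu2r, hagXu2, hw⟩
      -- apply c to (w, v)
      have hagX' : ∀ a ∈ c.1, (fun a => if a ∈ m.2.1 then u2 a else u a) a
          = (fun a => if a ∈ m.2.1 then u a else u1 a) a := by
        intro a ha
        have haY' : a ∉ c.2.1 := Finset.disjoint_left.mp hdisj ha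
        have huu1 : u a = u1 a := by simp [hu_def, haY']
        simp only
        split
        · rw [huu1]; exact (hag a ha).symm
        · exact huu1
      have hfinal := hT c hc _ hwr _ hvr hagX'
      apply hsnot
      have heq : (fun a => if a ∈ c.2.1 then (fun a => if a ∈ m.2.1 then u a else u1 a) a
          else (fun a => if a ∈ m.2.1 then u2 a else u a) a)
          = fun a => if a ∈ m.2.1 then u2 a else u1 a := by
        funext a
        by_cases h1 : a ∈ c.2.1 <;> by_cases h2 : a ∈ m.2.1 <;>
          simp [hu_def, h1, h2]
      rwa [heq] at hfinal
    · -- s1 = u2, s2 = u1 : symmetric main case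
      rw [h1, h2] at hag ⊢
      by_contra hne
      simp only [Set.mem_insert_iff, Set.mem_singleton_iff, not_or] at hne
      obtain ⟨hne1, hne2⟩ := hne
      set u : ∀ a, dom a := fun a => if a ∈ c.2.1 then u1 a else u2 a with hu_def
      have hur : u ∈ r := hT c hc u2 hu2r u1 hu1r hag
      obtain ⟨a2, ha2⟩ := Function.ne_iff.mp hne2
      have ha2Y' : a2 ∈ c.2.1 := by
        by_contra h; exact ha2 (by simp [hu_def, h])
      have ha2u1 : u a2 = u1 a2 := by simp [hu_def, ha2Y']
      have ha2ne : u1 a2 ≠ u2 a2 := by rw [← ha2u1]; exact ha2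
      obtain ⟨a1, ha1⟩ := Function.ne_iff.mp hne1
      have ha1Y' : a1 ∉ c.2.1 := by
        intro h; exact ha1 (by simp [hu_def, h])
      have ha1u2 : u a1 = u2 a1 := by simp [hu_def, ha1Y']
      have ha1ne : u1 a1 ≠ u2 a1 := fun h => ha1 (by rw [ha1u2, ← h])
      -- v = mix(u1, u; Y) is in r
      have hagXu : ∀ a ∈ m.1, u1 a = u a := by
        intro a ha
        simp only [hu_def]
        split
        · rfl
        · exact hagX a ha
      have hvr : (fun a => if a ∈ m.2.1 then u a else u1 a) ∈ r := by
        by_contra hv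
        have hsub : W u1 u2 ⊆ W u1 u := by
          intro a ha
          rw [hWmem] at ha ⊢
          simp only [hu_def]
          split
          · rfl
          · exact ha
        exact notviol u1 u ((Finset.ssubset_iff_of_subset hsub).mpr
          ⟨a2, (hWmem _ _ _).mpr ha2u1.symm, fun h => ha2ne ((hWmem _ _ _).mp h)⟩)
          ⟨hu1r, hur, hagXu, hv⟩
      -- w = mix(u, u2; Y) is in r
      have hagXu2 : ∀ a ∈ m.1, u a = u2 a := by
        intro a ha
        simp only [hu_def]
        split
        · exact hagX a ha
        · rfl
      have hwr : (fun a => if a ∈ m.2.1 then u2 a else u a) ∈ r := by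
        by_contra hw
        have hsub : W u1 u2 ⊆ W u u2 := by
          intro a ha
          rw [hWmem] at ha ⊢
          simp only [hu_def]
          split
          · exact ha
          · rfl
        exact notviol u u2 ((Finset.ssubset_iff_of_subset hsub).mpr
          ⟨a1, (hWmem _ _ _).mpr ha1u2, fun h => ha1ne ((hWmem _ _ _).mp h)⟩)
          ⟨hur, hu2r, hagXu2, hw⟩
      -- apply c to (v, w)
      have hagX' : ∀ a ∈ c.1, (fun a => if a ∈ m.2.1 then u a else u1 a) a
          = (fun a => if a ∈ m.2.1 then u2 a else u a) a := by
        intro a ha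
        have haY' : a ∉ c.2.1 := Finset.disjoint_left.mp hdisj ha
        have huu2 : u a = u2 a := by simp [hu_def, haY']
        simp only
        split
        · exact huu2
        · rw [huu2]; exact (hag a ha).symm
      have hfinal := hT c hc _ hvr _ hwr hagX'
      apply hsnot
      have heq : (fun a => if a ∈ c.2.1 then (fun a => if a ∈ m.2.1 then u2 a else u a) a
          else (fun a => if a ∈ m.2.1 then u a else u1 a) a)
          = fun a => if a ∈ m.2.1 then u2 a else u1 a := by
        funext a
        by_cases h1 : a ∈ c.2.1 <;> by_cases h2 : a ∈ m.2.1 <;>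
          simp [hu_def, h1, h2]
      rwa [heq] at hfinal
    · simp [h1, h2]
  refine ⟨u1, hu1r, u2, hu2r, hne12, hkey, ?_⟩
  intro hp
  have hmem := hp u1 (Set.mem_insert _ _) u2 (by simp) hagX
  have hsub : ({u1, u2} : Set (∀ a, dom a)) ⊆ r := by
    intro x hx
    rcases hx with rfl | hx
    · exact hu1r
    · rw [Set.mem_singleton_iff] at hx; exact hx ▸ hu2r
  exact hsnot (hsub hmem)
end

section
/- Let V be a finite variable set with |V| = n and let T be a set of mvd clauses over V, all with both disjuncts nonempty. Suppose L is a finite set of interpretations, each with |false(I)| ≥ 2, such that every I ∈ L violates some clause of T, and for every clause c ∈ T, the false-sets of the interpretations in L violating c are pairwise disjoint. Then |L| ≤ |T| · n / 2; in particular |L| ≤ |T| · n. -/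
open Finset

theorem stmt_15 {α : Type*} [Fintype α] [DecidableEq α]
    (T : Finset (Finset α × Finset α × Finset α))
    (hvalid : ∀ c ∈ T, Disjoint c.1 c.2.1 ∧ Disjoint c.1 c.2.2 ∧
      Disjoint c.2.1 c.2.2 ∧ c.1 ∪ c.2.1 ∪ c.2.2 = Finset.univ ∧
      c.2.1.Nonempty ∧ c.2.2.Nonempty)
    (L : Finset (Finset α))
    (hfalse : ∀ I ∈ L, 2 ≤ (Iᶜ : Finset α).card)
    (hviol : ∀ I ∈ L, ∃ c ∈ T, MvdViolates I c.1 c.2.1 c.2.2)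
    (hdisj : ∀ c ∈ T, ∀ I ∈ L, ∀ J ∈ L, I ≠ J →
      MvdViolates I c.1 c.2.1 c.2.2 → MvdViolates J c.1 c.2.1 c.2.2 →
      Disjoint (Iᶜ : Finset α) (Jᶜ : Finset α)) :
    L.card ≤ T.card * Fintype.card α / 2 ∧
      L.card ≤ T.card * Fintype.card α := by

  classical
  have key : 2 * L.card ≤ T.card * Fintype.card α := by
    have hsub : L ⊆ T.biUnion (fun c => L.filter (fun I => MvdViolates I c.1 c.2.1 c.2.2)) := by
      intro I hI
      obtain ⟨c, hc, hv⟩ := hviol I hI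
      exact Finset.mem_biUnion.2 ⟨c, hc, Finset.mem_filter.2 ⟨hI, hv⟩⟩
    have h1 : L.card ≤ ∑ c ∈ T, (L.filter (fun I => MvdViolates I c.1 c.2.1 c.2.2)).card :=
      le_trans (Finset.card_le_card hsub) (Finset.card_biUnion_le)
    have h2 : ∀ c ∈ T, 2 * (L.filter (fun I => MvdViolates I c.1 c.2.1 c.2.2)).card ≤ Fintype.card α := by
      intro c hc
      set S := L.filter (fun I => MvdViolates I c.1 c.2.1 c.2.2) with hS
      have hdisj' : ∀ I ∈ S, ∀ J ∈ S, I ≠ J → Disjoint (Iᶜ : Finset α) (Jᶜ : Finset α) := by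
        intro I hI J hJ hne
        rw [hS, Finset.mem_filter] at hI hJ
        exact hdisj c hc I hI.1 J hJ.1 hne hI.2 hJ.2
      have hcard : ∑ I ∈ S, (Iᶜ : Finset α).card = (S.biUnion (fun I => (Iᶜ : Finset α))).card :=
        (Finset.card_biUnion hdisj').symm
      have h3 : 2 * S.card ≤ ∑ I ∈ S, (Iᶜ : Finset α).card := by
        calc 2 * S.card = ∑ _I ∈ S, 2 := by rw [Finset.sum_const, smul_eq_mul, mul_comm]
        _ ≤ ∑ I ∈ S, (Iᶜ : Finset α).card := Finset.sum_le_sum (fun I hI => hfalse I (Finset.mem_filter.1 hI).1)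
      calc 2 * S.card ≤ _ := h3
        _ = _ := hcard
        _ ≤ Fintype.card α := by
          simpa using Finset.card_le_card (Finset.subset_univ _)
    calc 2 * L.card ≤ 2 * ∑ c ∈ T, (L.filter (fun I => MvdViolates I c.1 c.2.1 c.2.2)).card :=
          Nat.mul_le_mul_left 2 h1
      _ = ∑ c ∈ T, 2 * (L.filter (fun I => MvdViolates I c.1 c.2.1 c.2.2)).card := Finset.mul_sum ..
      _ ≤ ∑ _c ∈ T, Fintype.card α := Finset.sum_le_sum h2
      _ = T.card * Fintype.card α := by rw [Finset.sum_const, smul_eq_mul]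
  constructor
  · exact (Nat.le_div_iff_mul_le (by norm_num)).2 (by omega)
  · omega
end

section
/- Let V be a finite attribute set with every attribute domain of size at least 2, and let T, H be sets of mvds over V. If there exists a relation r over V such that every mvd of T holds in r but some mvd of H fails in r, then there exists an interpretation I over V (true(I) = the set of attributes on which two suitable tuples of r agree) such that I satisfies every mvd clause of T but violates some mvd clause of H. -/
open Finset

lemma mvd_pair_aux {α : Type*} [Fintype α] [DecidableEq α] {dom : α → Type*}
    [∀ a, DecidableEq (dom a)]
    (T : Set (Finset α × Finset α × Finset α))
    (hvalidT : ∀ c ∈ T, Disjoint c.2.1 c.2.2)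
    (r : Set (∀ a, dom a))
    (hT : ∀ c ∈ T, MvdHolds r c.1 c.2.1 c.2.2)
    (Xm Ym : Finset α) :
    ∀ n : ℕ, ∀ t1 ∈ r, ∀ t2 ∈ r,
      (Finset.univ.filter (fun a => t1 a ≠ t2 a)).card ≤ n →
      (∀ a ∈ Xm, t1 a = t2 a) →
      (fun a => if a ∈ Ym then t2 a else t1 a) ∉ r →
      ∃ s1 ∈ r, ∃ s2 ∈ r, (∀ a ∈ Xm, s1 a = s2 a) ∧
        (fun a => if a ∈ Ym then s2 a else s1 a) ∉ r ∧
        ∀ c ∈ T, ¬ MvdViolates (Finset.univ.filter fun a => s1 a = s2 a)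
          c.1 c.2.1 c.2.2 := by
  intro n
  induction n using Nat.strong_induction_on with
  | _ n ih =>
  intro t1 ht1 t2 ht2 hcard hXagree hu
  by_cases hsat : ∀ c ∈ T,
      ¬ MvdViolates (Finset.univ.filter fun a => t1 a = t2 a) c.1 c.2.1 c.2.2
  · exact ⟨t1, ht1, t2, ht2, hXagree, hu, hsat⟩
  push_neg at hsat
  obtain ⟨c, hcT, hviol⟩ := hsat
  rw [MvdViolates] at hviol
  obtain ⟨hXI, v, hvY, w, hwZ, hvI, hwI⟩ := hviol
  simp only [mem_filter, mem_univ, true_and] at hvI hwI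
  have hXeq : ∀ a ∈ c.1, t1 a = t2 a := fun a ha =>
    (mem_filter.mp (hXI ha)).2
  have ht3 : (fun a => if a ∈ c.2.1 then t2 a else t1 a) ∈ r :=
    hT c hcT t1 ht1 t2 ht2 hXeq
  have ht3' : (fun a => if a ∈ c.2.1 then t1 a else t2 a) ∈ r :=
    hT c hcT t2 ht2 t1 ht1 (fun a ha => (hXeq a ha).symm)
  set t3 : ∀ a, dom a := fun a => if a ∈ c.2.1 then t2 a else t1 a with ht3def
  set t3' : ∀ a, dom a := fun a => if a ∈ c.2.1 then t1 a else t2 a with ht3'def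
  set u1 : ∀ a, dom a := fun a => if a ∈ Ym then t3 a else t1 a with hu1def
  set u2 : ∀ a, dom a := fun a => if a ∈ Ym then t3' a else t1 a with hu2def
  have key : u1 ∉ r ∨ u2 ∉ r := by
    by_contra h
    push_neg at h
    obtain ⟨h1, h2⟩ := h
    have hagree : ∀ a ∈ c.1, u2 a = u1 a := by
      intro a ha
      have hx : t1 a = t2 a := hXeq a ha
      simp only [hu1def, hu2def, ht3def, ht3'def]
      split_ifs <;> simp [hx]
    have hmix := hT c hcT u2 h2 u1 h1 hagree
    have heq : (fun a => if a ∈ c.2.1 then u1 a else u2 a)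
        = (fun a => if a ∈ Ym then t2 a else t1 a) := by
      funext a
      by_cases hY : a ∈ c.2.1 <;>
        simp [hu1def, hu2def, ht3def, ht3'def, hY] <;>
        by_cases hm : a ∈ Ym <;> simp [hm, hY]
    rw [heq] at hmix
    exact hu hmix
  have hwne : t1 w ≠ t2 w := hwI
  have hvne : t1 v ≠ t2 v := hvI
  rcases key with h1 | h2
  · -- use pair (t1, t3)
    have hwZ1 : w ∉ c.2.1 := fun hw' => (hvalidT c hcT).forall_ne_finset hw' hwZ rfl
    have hsub : Finset.univ.filter (fun a => t1 a ≠ t3 a) ⊂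
        Finset.univ.filter (fun a => t1 a ≠ t2 a) := by
      constructor
      · intro a ha
        simp only [mem_filter, mem_univ, true_and, ht3def] at ha ⊢
        by_cases hY : a ∈ c.2.1
        · simpa [hY] using ha
        · simp [hY] at ha
      · intro hsub'
        have := hsub' (by simp [hwne] : w ∈ Finset.univ.filter (fun a => t1 a ≠ t2 a))
        simp [ht3def, hwZ1] at this
    have hlt : (Finset.univ.filter (fun a => t1 a ≠ t3 a)).card < n :=
      lt_of_lt_of_le (Finset.card_lt_card hsub) hcard
    refine ih _ hlt t1 ht1 t3 ht3 le_rfl ?_ h1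
    intro a ha
    simp [ht3def, hXagree a ha]
  · -- use pair (t1, t3')
    have hsub : Finset.univ.filter (fun a => t1 a ≠ t3' a) ⊂
        Finset.univ.filter (fun a => t1 a ≠ t2 a) := by
      constructor
      · intro a ha
        simp only [mem_filter, mem_univ, true_and, ht3'def] at ha ⊢
        by_cases hY : a ∈ c.2.1
        · simp [hY] at ha
        · simpa [hY] using ha
      · intro hsub'
        have := hsub' (by simp [hvne] : v ∈ Finset.univ.filter (fun a => t1 a ≠ t2 a))
        simp [ht3'def, hvY] at this
    have hlt : (Finset.univ.filter (fun a => t1 a ≠ t3' a)).card < n :=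
      lt_of_lt_of_le (Finset.card_lt_card hsub) hcard
    refine ih _ hlt t1 ht1 t3' ht3' le_rfl ?_ h2
    intro a ha
    simp [ht3'def, hXagree a ha]

theorem stmt_16 {α : Type*} [Fintype α] [DecidableEq α] {dom : α → Type*}
    [∀ a, DecidableEq (dom a)]
    (hdom : ∀ a, ∃ x y : dom a, x ≠ y)
    (T H : Set (Finset α × Finset α × Finset α))
    (hvalidT : ∀ c ∈ T, Disjoint c.1 c.2.1 ∧ Disjoint c.1 c.2.2 ∧
      Disjoint c.2.1 c.2.2 ∧ c.1 ∪ c.2.1 ∪ c.2.2 = Finset.univ ∧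
      c.2.1.Nonempty ∧ c.2.2.Nonempty)
    (hvalidH : ∀ c ∈ H, Disjoint c.1 c.2.1 ∧ Disjoint c.1 c.2.2 ∧
      Disjoint c.2.1 c.2.2 ∧ c.1 ∪ c.2.1 ∪ c.2.2 = Finset.univ ∧
      c.2.1.Nonempty ∧ c.2.2.Nonempty)
    (r : Set (∀ a, dom a))
    (hT : ∀ c ∈ T, MvdHolds r c.1 c.2.1 c.2.2)
    (hH : ∃ m ∈ H, ¬ MvdHolds r m.1 m.2.1 m.2.2) :
    ∃ I : Finset α, (∃ t1 ∈ r, ∃ t2 ∈ r,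
        I = Finset.univ.filter (fun a => t1 a = t2 a)) ∧
      (∀ c ∈ T, ¬ MvdViolates I c.1 c.2.1 c.2.2) ∧
      (∃ c ∈ H, MvdViolates I c.1 c.2.1 c.2.2) := by
  obtain ⟨m, hmH, hmfail⟩ := hH
  rw [MvdHolds] at hmfail
  push_neg at hmfail
  obtain ⟨t1, ht1, t2, ht2, hXag, hu⟩ := hmfail
  obtain ⟨s1, hs1, s2, hs2, hXagree, hu', hTsat⟩ :=
    mvd_pair_aux T (fun c hc => (hvalidT c hc).2.2.1) r hT m.1 m.2.1
      (Finset.univ.filter (fun a => t1 a ≠ t2 a)).card t1 ht1 t2 ht2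
      le_rfl hXag hu
  refine ⟨Finset.univ.filter (fun a => s1 a = s2 a),
    ⟨s1, hs1, s2, hs2, rfl⟩, hTsat, m, hmH, ?_⟩
  obtain ⟨-, -, -, hunion, -, -⟩ := hvalidH m hmH
  have hY : ∃ v ∈ m.2.1, s1 v ≠ s2 v := by
    by_contra h
    push_neg at h
    have : (fun a => if a ∈ m.2.1 then s2 a else s1 a) = s1 := by
      funext a
      by_cases hm : a ∈ m.2.1 <;> simp [hm]
      exact (h a hm).symm
    exact hu' (by rw [this]; exact hs1)
  have hZ : ∃ w ∈ m.2.2, s1 w ≠ s2 w := by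
    by_contra h
    push_neg at h
    have : (fun a => if a ∈ m.2.1 then s2 a else s1 a) = s2 := by
      funext a
      by_cases hm : a ∈ m.2.1
      · simp [hm]
      · simp only [hm, if_neg, if_false]
        have : a ∈ m.1 ∪ m.2.1 ∪ m.2.2 := hunion ▸ mem_univ a
        simp only [Finset.mem_union] at this
        rcases this with (ha | ha) | ha
        · exact hXagree a ha
        · exact absurd ha hm
        · exact h a ha
    exact hu' (by rw [this]; exact hs2)
  obtain ⟨v, hv, hvne⟩ := hY
  obtain ⟨w, hw, hwne⟩ := hZ
  exact ⟨fun a ha => mem_filter.mpr ⟨mem_univ a, hXagree a ha⟩,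
    v, hv, w, hw, by simp [hvne], by simp [hwne]⟩
end
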